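/- arXiv:1808.05354 — 5 statements merged into one kernel-verified Lean document; each statement's English description precedes it below -/
import Mathlib

section
/- Let p be a prime, k ≥ 0, 1 ≤ t ≤ p^k, and q a power of p. Then q divides C(p^k, l) for all l = 1, 2, …, t if and only if q · p^{⌊log_p t⌋} divides p^k. -/
/-! For `0 < l ≤ p^k`, Kummer's theorem gives `v_p C(p^k, l) = k - v_p(l)`, so the condition says
`e + v_p(l) ≤ k` for all `1 ≤ l ≤ t`. The largest `v_p(l)` with `l ≤ t` is `⌊log_p t⌋`, attained at
`l = p^⌊log_p t⌋`. -/

namespace Nat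

theorem factorization_le_log (p : ℕ) {n : ℕ} (hn : n ≠ 0) : n.factorization p ≤ log p n := by
  rcases lt_or_ge 1 p with hp | hp
  · exact le_log_of_pow_le hp (ordProj_le p hn)
  · rw [factorization_eq_zero_of_not_prime n (fun h => hp.not_gt h.one_lt)]
    exact Nat.zero_le _

theorem Prime.pow_dvd_choose_prime_pow_iff {p k l e : ℕ} (hp : p.Prime) (hl0 : l ≠ 0)
    (hl : l ≤ p ^ k) : p ^ e ∣ choose (p ^ k) l ↔ e + l.factorization p ≤ k := by
  rw [hp.pow_dvd_iff_le_factorization (choose_pos hl).ne']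
  have := factorization_choose_prime_pow_add_factorization hp hl hl0
  omega

end Nat

/-- Let `p` be a prime, `k ≥ 0`, `1 ≤ t ≤ p^k`, and `q = p^e` a power of `p`.
Then `q` divides `C(p^k, l)` for all `l = 1, …, t` if and only if
`q * p^⌊log_p t⌋` divides `p^k`. -/
theorem pow_dvd_choose_iff (p k t e : ℕ) (hp : p.Prime)
    (ht1 : 1 ≤ t) (ht2 : t ≤ p ^ k) :
    (∀ l, 1 ≤ l → l ≤ t → p ^ e ∣ Nat.choose (p ^ k) l) ↔
      p ^ e * p ^ Nat.log p t ∣ p ^ k := by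
  rw [← pow_add, Nat.pow_dvd_pow_iff_le_right hp.one_lt]
  constructor
  · intro h
    have hpow : p ^ Nat.log p t ≤ t := Nat.pow_log_le_self p (by omega)
    have hdvd := h _ (Nat.one_le_pow _ _ hp.pos) hpow
    rwa [hp.pow_dvd_choose_prime_pow_iff (pow_ne_zero _ hp.ne_zero) (hpow.trans ht2),
      Nat.factorization_pow_self hp] at hdvd
  · intro h l hl1 hlt
    rw [hp.pow_dvd_choose_prime_pow_iff (by omega) (hlt.trans ht2)]
    have := (Nat.factorization_le_log p (by omega)).trans (Nat.log_mono_right hlt)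
    omega
end

section
/- Let p be a prime, s ≥ 1, and q > 1 a power of p. The group of upper-triangular unipotent (s+1)×(s+1) matrices over ℤ/q has exponent q · p^{⌊log_p s⌋}. -/
/-! Write a unipotent `M` as `N + 1` with `N ^ (s + 1) = 0`, so that
`M ^ m = ∑_{k ≤ s} C(m, k) • N ^ k`. With `L = ⌊log_p s⌋`, Kummer's theorem gives
`v_p C(p^(e+L), k) = e + L - v_p k ≥ e` for `1 ≤ k ≤ s`, so `p^(e+L)` kills every unipotent matrix.
Conversely, for the Jordan block `J + 1` the `(0, k)` entry of `(J + 1) ^ m` is `C(m, k)`, and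
`v_p C(p^(e-1+L), p^L) = e - 1`; hence `J + 1` has order exactly `p^(e+L)`. -/

/-- A matrix is (upper-triangular) unipotent if it has `1` on the diagonal and
`0` below the diagonal. -/
def IsUnipotent {n : ℕ} {R : Type*} [CommRing R] (M : Matrix (Fin n) (Fin n) R) : Prop :=
  (∀ i, M i i = 1) ∧ ∀ i j : Fin n, (j : ℕ) < (i : ℕ) → M i j = 0

namespace Nat.Prime

variable {p : ℕ}

lemma multiplicity_le_log (hp : p.Prime) {k : ℕ} (hk : k ≠ 0) : multiplicity p k ≤ Nat.log p k :=
  Nat.le_log_of_pow_le hp.one_lt (Nat.le_of_dvd (Nat.pos_of_ne_zero hk) (pow_multiplicity_dvd p k))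

lemma pow_dvd_choose_prime_pow (hp : p.Prime) {e n k : ℕ} (hk : k ≠ 0) (h : e + Nat.log p k ≤ n) :
    p ^ e ∣ (p ^ n).choose k := by
  rcases le_or_gt k (p ^ n) with hkn | hkn
  · rw [pow_dvd_iff_le_emultiplicity, hp.emultiplicity_choose_prime_pow hkn hk, Nat.cast_le]
    have := hp.multiplicity_le_log hk
    omega
  · rw [Nat.choose_eq_zero_of_lt hkn]
    exact dvd_zero _

lemma not_pow_succ_dvd_choose_pow_add_pow (hp : p.Prime) (e j : ℕ) :
    ¬p ^ (e + 1) ∣ (p ^ (e + j)).choose (p ^ j) := by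
  rw [pow_dvd_iff_le_emultiplicity, hp.emultiplicity_choose_prime_pow
    (Nat.pow_le_pow_right hp.pos (Nat.le_add_left j e)) (pow_ne_zero _ hp.ne_zero),
    multiplicity_pow_self_of_prime hp.prime, Nat.cast_le]
  omega

end Nat.Prime

lemma add_one_pow_eq_sum {R : Type*} [Semiring R] (N : R) (m : ℕ) :
    (N + 1) ^ m = ∑ k ∈ Finset.range (m + 1), m.choose k • N ^ k := by
  rw [(Commute.one_right N).add_pow]
  refine Finset.sum_congr rfl fun k _ => ?_
  rw [one_pow, mul_one, nsmul_eq_mul, (Nat.cast_commute _ _).eq]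

lemma add_one_pow_eq_one_of_pow_eq_zero {R : Type*} [Semiring R] {N : R} {s m : ℕ}
    (hN : N ^ (s + 1) = 0) (hm : ∀ k, k ≠ 0 → k ≤ s → (m.choose k : R) = 0) :
    (N + 1) ^ m = 1 := by
  rw [add_one_pow_eq_sum, Finset.sum_eq_single 0]
  · simp
  · intro k _ hk
    rcases le_or_gt k s with hks | hks
    · rw [nsmul_eq_mul, hm k hk hks, zero_mul]
    · rw [pow_eq_zero_of_le hks hN, smul_zero]
  · simp

namespace Matrix

variable {n : ℕ} {R : Type*}

lemma pow_apply_eq_zero_of_lt_add [Semiring R] {N : Matrix (Fin n) (Fin n) R}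
    (hN : ∀ i j : Fin n, (j : ℕ) ≤ i → N i j = 0) (k : ℕ) {i j : Fin n} (h : (j : ℕ) < i + k) :
    (N ^ k) i j = 0 := by
  induction k generalizing i with
  | zero => exact one_apply_ne (by rintro rfl; omega)
  | succ k ih =>
    rw [pow_succ', mul_apply]
    refine Finset.sum_eq_zero fun l _ => ?_
    rcases le_or_gt (l : ℕ) i with hl | hl
    · rw [hN i l hl, zero_mul]
    · rw [ih (by omega), mul_zero]

lemma pow_card_eq_zero_of_apply_eq_zero_of_le [Semiring R] {N : Matrix (Fin n) (Fin n) R}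
    (hN : ∀ i j : Fin n, (j : ℕ) ≤ i → N i j = 0) : N ^ n = 0 := by
  ext i j
  exact pow_apply_eq_zero_of_lt_add hN n (by omega)

variable (n R) in
def shift [Zero R] [One R] : Matrix (Fin n) (Fin n) R :=
  of fun i j => if (j : ℕ) = i + 1 then 1 else 0

lemma shift_pow_apply [Semiring R] (k : ℕ) (i j : Fin n) :
    (shift n R ^ k) i j = if (j : ℕ) = i + k then 1 else 0 := by
  induction k generalizing i with
  | zero => simp [one_apply, Fin.ext_iff, eq_comm]
  | succ k ih =>
    rw [pow_succ', mul_apply]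
    by_cases h : (j : ℕ) = i + (k + 1)
    · rw [if_pos h, Finset.sum_eq_single_of_mem ⟨i + 1, by omega⟩ (Finset.mem_univ _)]
      · rw [ih, if_pos (by dsimp only; omega), shift, of_apply, if_pos rfl, one_mul]
      · intro l _ hl
        rw [shift, of_apply, if_neg fun h => hl (Fin.ext h), zero_mul]
    · rw [if_neg h]
      refine Finset.sum_eq_zero fun l _ => ?_
      rw [ih, shift, of_apply]
      split_ifs <;> first | omega | simp

lemma shift_add_one_pow_apply_zero [Semiring R] (m : ℕ) (j : Fin (n + 1)) :
    ((shift (n + 1) R + 1) ^ m) 0 j = m.choose j := by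
  rw [add_one_pow_eq_sum, sum_apply]
  simp only [smul_apply, shift_pow_apply, Fin.val_zero, zero_add, smul_ite,
    nsmul_eq_mul, mul_one, smul_zero, Finset.sum_ite_eq, Finset.mem_range, Order.lt_add_one_iff]
  split_ifs with h
  · rfl
  · rw [Nat.choose_eq_zero_of_lt (not_le.1 h), Nat.cast_zero]

end Matrix

namespace IsUnipotent

variable {n : ℕ} {R : Type*} [CommRing R]

lemma sub_one_pow_eq_zero {M : Matrix (Fin n) (Fin n) R} (hM : IsUnipotent M) :
    (M - 1) ^ n = 0 := by
  refine Matrix.pow_card_eq_zero_of_apply_eq_zero_of_le fun i j hij => ?_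
  rcases hij.eq_or_lt with h | h
  · obtain rfl := Fin.ext h
    simp [hM.1]
  · simp [hM.2 i j h, Matrix.one_apply_ne (Fin.ne_of_lt h).symm]

lemma pow_eq_one {s m : ℕ} {M : Matrix (Fin (s + 1)) (Fin (s + 1)) R} (hM : IsUnipotent M)
    (hm : ∀ k, k ≠ 0 → k ≤ s → (m.choose k : R) = 0) : M ^ m = 1 := by
  simpa using add_one_pow_eq_one_of_pow_eq_zero hM.sub_one_pow_eq_zero fun k hk hks => by
    rw [← map_natCast (Matrix.scalar (Fin (s + 1))), hm k hk hks, map_zero]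

lemma pow_prime_pow_eq_one {p e s : ℕ} (hp : p.Prime)
    {M : Matrix (Fin (s + 1)) (Fin (s + 1)) (ZMod (p ^ e))} (hM : IsUnipotent M) :
    M ^ p ^ (e + Nat.log p s) = 1 :=
  hM.pow_eq_one fun k hk hks => (ZMod.natCast_eq_zero_iff _ _).2 <|
    hp.pow_dvd_choose_prime_pow hk (by have := Nat.log_mono_right (b := p) hks; omega)

end IsUnipotent

lemma isUnipotent_shift_add_one {n : ℕ} {R : Type*} [CommRing R] :
    IsUnipotent (Matrix.shift n R + 1) := by
  refine ⟨fun i => by simp [Matrix.shift], fun i j hij => ?_⟩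
  simp [Matrix.shift, Matrix.one_apply_ne (Fin.ne_of_lt hij).symm, show (j : ℕ) ≠ i + 1 by omega]

lemma orderOf_shift_add_one {p e s : ℕ} (hp : p.Prime) (he : e ≠ 0) (hs : s ≠ 0) :
    orderOf (Matrix.shift (s + 1) (ZMod (p ^ e)) + 1) = p ^ (e + Nat.log p s) := by
  have : Fact p.Prime := ⟨hp⟩
  obtain ⟨e, rfl⟩ := Nat.exists_eq_add_one_of_ne_zero he
  rw [add_right_comm]
  refine orderOf_eq_prime_pow (fun h => ?_) ?_
  · have hL : p ^ Nat.log p s < s + 1 := Nat.lt_succ_of_le (Nat.pow_log_le_self p hs)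
    have h0L : (0 : Fin (s + 1)) ≠ ⟨_, hL⟩ := Fin.ne_of_val_ne (pow_ne_zero _ hp.ne_zero).symm
    have := congrFun (congrFun h 0) ⟨_, hL⟩
    rw [Matrix.shift_add_one_pow_apply_zero, Matrix.one_apply_ne h0L, ZMod.natCast_eq_zero_iff] at this
    exact hp.not_pow_succ_dvd_choose_pow_add_pow e _ this
  · rw [← add_right_comm]
    exact isUnipotent_shift_add_one.pow_prime_pow_eq_one hp

/-- (Sawin)  For a prime `p`, `s ≥ 1`, and `q = p^e > 1` a power of `p`, the group of
upper-triangular unipotent `(s+1)×(s+1)` matrices over `ℤ/q` has exponent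
`q * p^⌊log_p s⌋`: this number kills every unipotent matrix, and it divides every
positive integer `m` such that `M^m = 1` for all unipotent `M`. -/
theorem exponent_unipotent (p s e q : ℕ) (hp : p.Prime) (hs : 1 ≤ s)
    (he : 1 ≤ e) (hq : q = p ^ e) :
    (∀ M : Matrix (Fin (s + 1)) (Fin (s + 1)) (ZMod q),
        IsUnipotent M → M ^ (q * p ^ Nat.log p s) = 1) ∧
    (∀ m : ℕ, 0 < m →
        (∀ M : Matrix (Fin (s + 1)) (Fin (s + 1)) (ZMod q),
          IsUnipotent M → M ^ m = 1) →
        q * p ^ Nat.log p s ∣ m) := by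
  subst hq
  rw [← pow_add]
  refine ⟨fun M hM => hM.pow_prime_pow_eq_one hp, fun m _ hm => ?_⟩
  rw [← orderOf_shift_add_one hp (by omega) (by omega)]
  exact orderOf_dvd_of_pow_eq_one (hm _ isUnipotent_shift_add_one)
end

section
/- Let X = {x}, p a prime, and s ≥ 2. Then Sh_ℤ(X)_indec,s ⊗ (ℤ/p) is isomorphic to ℤ/p if s is a power of p, and is zero otherwise. -/
/-- The multiset of all shuffles (interleavings) of two words. -/
def shuffles {α : Type*} : List α → List α → Multiset (List α)
  | [], v => {v}
  | a :: u, [] => {a :: u}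
  | a :: u, b :: v =>
      ((shuffles u (b :: v)).map (a :: ·)) + ((shuffles (a :: u) v).map (b :: ·))
termination_by u v => u.length + v.length

/-- The shuffle product of two words, as an element of the free `ℤ`-module `ℤ⟨X⟩`. -/
noncomputable def sh {α : Type*} (u v : List α) : List α →₀ ℤ :=
  ((shuffles u v).map fun w => Finsupp.single w (1 : ℤ)).sum

/-- The submodule of weakly decomposable elements of the shuffle algebra `Sh_ℤ(X)`:
the `ℤ`-submodule generated by all shuffle products of pairs of nonempty words. -/
noncomputable def weaklyDec (α : Type*) : Submodule ℤ (List α →₀ ℤ) :=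
  Submodule.span ℤ {f | ∃ u v : List α, u ≠ [] ∧ v ≠ [] ∧ f = sh u v}

/-- The degree-`s` homogeneous component of `Sh_ℤ(X)`: the span of the words of length `s`. -/
noncomputable def degComp (α : Type*) (s : ℕ) : Submodule ℤ (List α →₀ ℤ) :=
  Submodule.span ℤ {f | ∃ w : List α, w.length = s ∧ f = Finsupp.single w (1 : ℤ)}

/-- The degree-`s` component of the indecomposable quotient `Sh_ℤ(X)_indec`,
realized as the quotient of the degree-`s` component by its weakly decomposable part. -/
noncomputable abbrev shIndec (α : Type*) (s : ℕ) :=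
  degComp α s ⧸ Submodule.comap (degComp α s).subtype (weaklyDec α ⊓ degComp α s)

/-!
Over one letter every word of length `n` is `x^n`, and `x^i ⧢ x^j = C(i+j, i) x^(i+j)`.
So the degree-`s` indecomposables are `ℤ / h(s)`, where `h(s) ℤ` is the ideal generated by
the `C(s, i)`, `0 < i < s`, and tensoring with `ℤ/p` gives `ℤ / (h(s) ℤ + p ℤ)`. As `p ℤ` is
maximal this is `ℤ/p` if `p` divides every `C(s, i)` and `0` otherwise. The former holds
exactly for powers of `p`: writing `s = p^a m` with `p ∤ m`, Lucas' theorem gives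
`C(s, p^a) ≡ m [MOD p]`.
-/

theorem card_shuffles {α : Type*} (u v : List α) :
    Multiset.card (shuffles u v) = (u.length + v.length).choose u.length := by
  induction u, v using shuffles.induct with
  | case1 v => simp [shuffles]
  | case2 a u => simp [shuffles]
  | case3 a u b v ih₁ ih₂ =>
    simp only [shuffles, Multiset.card_add, Multiset.card_map, ih₁, ih₂, List.length_cons]
    rw [show u.length + 1 + (v.length + 1) = u.length + (v.length + 1) + 1 by ring,
      Nat.choose_succ_succ]
    congr 2
    omega

theorem length_of_mem_shuffles {α : Type*} {u v w : List α} (hw : w ∈ shuffles u v) :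
    w.length = u.length + v.length := by
  induction u, v using shuffles.induct generalizing w with
  | case1 v => simp_all [shuffles]
  | case2 a u => simp_all [shuffles]
  | case3 a u b v ih₁ ih₂ =>
    simp only [shuffles, Multiset.mem_add, Multiset.mem_map] at hw
    rcases hw with ⟨w, hw, rfl⟩ | ⟨w, hw, rfl⟩
    · simp only [List.length_cons, ih₁ hw]; omega
    · simp only [List.length_cons, ih₂ hw]; omega

noncomputable abbrev xPow (n : ℕ) : List Unit →₀ ℤ :=
  Finsupp.single (List.replicate n ()) 1

theorem List.eq_replicate_length_unit (w : List Unit) : w = List.replicate w.length () :=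
  List.eq_replicate_length.2 fun _ _ => rfl

theorem sh_unit (u v : List Unit) :
    sh u v = ((u.length + v.length).choose u.length : ℤ) • xPow (u.length + v.length) := by
  have hconst : ∀ w ∈ shuffles u v,
      Finsupp.single w (1 : ℤ) = xPow (u.length + v.length) := by
    intro w hw
    rw [xPow, ← length_of_mem_shuffles hw, ← List.eq_replicate_length_unit]
  rw [sh, Multiset.map_congr rfl hconst, Multiset.map_const', Multiset.sum_replicate,
    card_shuffles, natCast_zsmul]

theorem degComp_unit (s : ℕ) : degComp Unit s = ℤ ∙ xPow s := by
  refine congrArg _ (Set.ext fun f => ⟨?_, ?_⟩)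
  · rintro ⟨w, rfl, rfl⟩
    rw [List.eq_replicate_length_unit w, List.length_replicate]
    rfl
  · rintro rfl
    exact ⟨_, List.length_replicate, rfl⟩

theorem xPow_mem_degComp (s : ℕ) : xPow s ∈ degComp Unit s :=
  degComp_unit s ▸ Submodule.mem_span_singleton_self _

theorem eq_smul_xPow_of_mem_degComp {s : ℕ} {f : List Unit →₀ ℤ}
    (hf : f ∈ degComp Unit s) :
    f = f (List.replicate s ()) • xPow s := by
  obtain ⟨c, rfl⟩ := Submodule.mem_span_singleton.1 (degComp_unit s ▸ hf)
  simp [xPow]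

/-- The ideal `h(s) ℤ`. -/
noncomputable def innerChooseIdeal (s : ℕ) : Ideal ℤ :=
  Ideal.span ((fun i => (s.choose i : ℤ)) '' Set.Ioo 0 s)

theorem apply_replicate_mem_innerChooseIdeal {s : ℕ} {f : List Unit →₀ ℤ}
    (hf : f ∈ weaklyDec Unit) : f (List.replicate s ()) ∈ innerChooseIdeal s := by
  induction hf using Submodule.span_induction with
  | mem _ h =>
    obtain ⟨u, v, hu, hv, rfl⟩ := h
    rw [sh_unit, Finsupp.smul_apply, xPow, Finsupp.single_apply]
    split_ifs with hlen
    · have hs : u.length + v.length = s := by simpa using congrArg List.length hlen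
      rw [smul_eq_mul, mul_one, ← hs]
      exact Ideal.subset_span
        ⟨u.length, ⟨List.length_pos_iff.2 hu, by simpa using List.length_pos_iff.2 hv⟩, rfl⟩
    · simp
  | zero => exact zero_mem _
  | add _ _ _ _ hf hg => exact add_mem hf hg
  | smul c _ _ hf => exact Submodule.smul_mem _ c hf

theorem choose_smul_xPow_mem_weaklyDec {s i : ℕ} (hi : i ∈ Set.Ioo 0 s) :
    (s.choose i : ℤ) • xPow s ∈ weaklyDec Unit := by
  obtain ⟨hi₀, his⟩ := hi
  have hsh := sh_unit (List.replicate i ()) (List.replicate (s - i) ())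
  simp only [List.length_replicate, Nat.add_sub_cancel' his.le] at hsh
  refine Submodule.subset_span ⟨_, _, ?_, ?_, hsh.symm⟩ <;>
    simp only [ne_eq, List.replicate_eq_nil_iff] <;> omega

theorem smul_xPow_mem_weaklyDec_iff {s : ℕ} {c : ℤ} :
    c • xPow s ∈ weaklyDec Unit ↔ c ∈ innerChooseIdeal s := by
  refine ⟨fun h => by simpa [xPow] using apply_replicate_mem_innerChooseIdeal (s := s) h,
    fun h => ?_⟩
  have hle : innerChooseIdeal s ≤
      (weaklyDec Unit).comap (LinearMap.toSpanSingleton ℤ _ (xPow s)) :=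
    Ideal.span_le.2 fun _ ⟨i, hi, hc⟩ => hc ▸ choose_smul_xPow_mem_weaklyDec hi
  exact hle h

noncomputable def degCompUnitEquiv (s : ℕ) : degComp Unit s ≃ₗ[ℤ] ℤ where
  toFun f := f.1 (List.replicate s ())
  invFun c := ⟨c • xPow s, Submodule.smul_mem _ c (xPow_mem_degComp s)⟩
  map_add' _ _ := rfl
  map_smul' _ _ := rfl
  left_inv f := Subtype.ext (eq_smul_xPow_of_mem_degComp f.2).symm
  right_inv c := by simp [xPow]

theorem map_degCompUnitEquiv (s : ℕ) :
    (Submodule.comap (degComp Unit s).subtype (weaklyDec Unit ⊓ degComp Unit s)).map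
      (degCompUnitEquiv s : degComp Unit s →ₗ[ℤ] ℤ) = innerChooseIdeal s := by
  rw [Submodule.map_equiv_eq_comap_symm]
  ext c
  simp only [Submodule.mem_comap, Submodule.mem_inf, Submodule.coe_subtype]
  exact ⟨fun h => smul_xPow_mem_weaklyDec_iff.1 h.1,
    fun h => ⟨smul_xPow_mem_weaklyDec_iff.2 h, ((degCompUnitEquiv s).symm c).2⟩⟩

noncomputable def shIndecUnitEquiv (s : ℕ) :
    shIndec Unit s ≃ₗ[ℤ] ℤ ⧸ innerChooseIdeal s :=
  Submodule.Quotient.equiv _ _ (degCompUnitEquiv s) (map_degCompUnitEquiv s)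

noncomputable def quotTensorQuotEquivQuotSup {R : Type*} [CommRing R] (I J : Ideal R) :
    TensorProduct R (R ⧸ I) (R ⧸ J) ≃ₗ[R] R ⧸ (J ⊔ I) :=
  ((Algebra.TensorProduct.quotIdealMapEquivQuotTensor (R ⧸ J) I).symm.restrictScalars R
    ).toLinearEquiv ≪≫ₗ (DoubleQuot.quotQuotEquivQuotSupₐ R J I).toLinearEquiv

theorem choose_mul_prime_pow_modEq {p : ℕ} (hp : p.Prime) (m a : ℕ) :
    (m * p ^ a).choose (p ^ a) ≡ m [MOD p] := by
  induction a with
  | zero => simp [Nat.ModEq.refl]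
  | succ a ih =>
    have : Fact p.Prime := ⟨hp⟩
    refine Nat.ModEq.trans ?_ ih
    simpa [pow_succ, ← mul_assoc, Nat.mul_div_cancel _ hp.pos] using
      Choose.choose_modEq_choose_mod_mul_choose_div_nat
        (n := m * p ^ a * p) (k := p ^ a * p) (p := p)

theorem Nat.Prime.forall_dvd_choose_iff {p s : ℕ} (hp : p.Prime) (hs : s ≠ 0) :
    (∀ i ∈ Set.Ioo 0 s, p ∣ s.choose i) ↔ ∃ k, s = p ^ k := by
  constructor
  · intro h
    obtain ⟨e, m, hpm, rfl⟩ := Nat.exists_eq_pow_mul_and_not_dvd hs p hp.ne_one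
    refine ⟨e, ?_⟩
    suffices m = 1 by rw [this, mul_one]
    by_contra hm1
    have hm : 1 < m := by
      have : m ≠ 0 := by rintro rfl; simp at hs
      omega
    have hdvd := h (p ^ e) ⟨pow_pos hp.pos e, lt_mul_of_one_lt_right (pow_pos hp.pos e) hm⟩
    rw [mul_comm] at hdvd
    exact hpm (((choose_mul_prime_pow_modEq hp m e).dvd_iff dvd_rfl).1 hdvd)
  · rintro ⟨k, rfl⟩ i ⟨hi₀, his⟩
    exact hp.dvd_choose_pow hi₀.ne' his.ne

theorem innerChooseIdeal_le_span_iff {s : ℕ} {p : ℕ} :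
    innerChooseIdeal s ≤ Ideal.span {(p : ℤ)} ↔ ∀ i ∈ Set.Ioo 0 s, p ∣ s.choose i := by
  rw [innerChooseIdeal, Ideal.span_le, Set.image_subset_iff]
  simp [Set.subset_def, Ideal.mem_span_singleton, Int.natCast_dvd_natCast]

/-- For the one-letter alphabet `X = {x}`, a prime `p` and `s ≥ 2`, the tensor product
`Sh_ℤ(X)_indec,s ⊗ ℤ/p` is isomorphic to `ℤ/p` if `s` is a power of `p`, and is zero
otherwise. -/
theorem oneLetter_indec_tensor (p s : ℕ) (hp : p.Prime) (hs : 2 ≤ s) :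
    ((∃ k, s = p ^ k) →
      Nonempty (TensorProduct ℤ (ZMod p) (shIndec Unit s) ≃ₗ[ℤ] ZMod p)) ∧
    (¬ (∃ k, s = p ^ k) →
      Subsingleton (TensorProduct ℤ (ZMod p) (shIndec Unit s))) := by
  have : Fact p.Prime := ⟨hp⟩
  let P : Ideal ℤ := Ideal.span {(p : ℤ)}
  let zmodEquiv : (ℤ ⧸ P) ≃ₗ[ℤ] ZMod p :=
    (Int.quotientSpanNatEquivZMod p).toAddEquiv.toIntLinearEquiv
  let e :
      TensorProduct ℤ (ZMod p) (shIndec Unit s) ≃ₗ[ℤ] ℤ ⧸ (innerChooseIdeal s ⊔ P) :=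
    TensorProduct.congr zmodEquiv.symm (shIndecUnitEquiv s) ≪≫ₗ quotTensorQuotEquivQuotSup P _
  have hle : innerChooseIdeal s ≤ P ↔ ∃ k, s = p ^ k :=
    innerChooseIdeal_le_span_iff.trans (hp.forall_dvd_choose_iff (by omega))
  refine ⟨fun hpow => ?_, fun hpow => ?_⟩
  · exact ⟨e ≪≫ₗ Submodule.quotEquivOfEq _ _ (sup_eq_right.2 (hle.2 hpow)) ≪≫ₗ
      zmodEquiv⟩
  · have hP : IsCoatom P := Ideal.isMaximal_def.1 inferInstance
    have htop : innerChooseIdeal s ⊔ P = ⊤ :=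
      codisjoint_iff.1 (hP.not_le_iff_codisjoint.1 (mt hle.1 hpow)).symm
    have : Subsingleton (ℤ ⧸ (innerChooseIdeal s ⊔ P)) :=
      Submodule.Quotient.subsingleton_iff.2 htop
    exact e.toEquiv.subsingleton
end

section
/- Every nonempty word w over a totally ordered alphabet X can be written uniquely as a concatenation w = u_1^{i_1} ⋯ u_k^{i_k} of Lyndon words u_1 > ⋯ > u_k with i_1, …, i_k ≥ 1. -/
/-!
Existence: prepend the letters of `w` one at a time to a factorization of the rest. As long as the
new first factor `u` is smaller than the next factor `c`, merge them: `u ++ c` is again Lyndon,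
because `u < c` forces `u ++ c < c`.

Uniqueness: the first factor `v` of a non-increasing Lyndon factorization of `w` is the longest
Lyndon prefix of `w`. A longer Lyndon prefix `u` would have a proper suffix `p` that is a prefix of
some later factor `x`, and then `u < p ≤ x ≤ v ≤ u`.
-/

/-- A nonempty word over a totally ordered alphabet is a Lyndon word if it is
lexicographically strictly smaller than each of its nontrivial proper suffixes. -/
def IsLyndon {α : Type*} [LinearOrder α] (w : List α) : Prop :=
  w ≠ [] ∧ ∀ i, 0 < i → i < w.length → w < w.drop i

namespace List

theorem Lex.append_of_not_prefix {α : Type*} {r : α → α → Prop} :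
    ∀ {u v : List α}, Lex r u v → ¬ u <+: v → ∀ x y, Lex r (u ++ x) (v ++ y)
  | _, _, .nil, hp, _, _ => absurd nil_prefix hp
  | _, _, .rel h, _, _, _ => .rel h
  | _, _, .cons h, hp, x, y =>
    .cons (h.append_of_not_prefix (fun hc => hp (cons_prefix_cons.mpr ⟨rfl, hc⟩)) x y)

theorem exists_drop_prefix_of_prefix_flatten {α : Type*} :
    ∀ {l : List (List α)} {s : List α}, s ≠ [] → s <+: l.flatten →
      ∃ x ∈ l, ∃ k < s.length, s.drop k <+: x
  | [], s, hs, h => absurd (prefix_nil.mp h) hs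
  | v :: t, s, hs, h => by
    have hv : v <+: (v :: t).flatten := prefix_append v t.flatten
    by_cases hlen : s.length ≤ v.length
    · exact ⟨v, mem_cons_self, 0, length_pos_iff.mpr hs, prefix_of_prefix_length_le h hv hlen⟩
    obtain ⟨s', rfl⟩ := prefix_of_prefix_length_le hv h (by omega)
    have hs' : s' ≠ [] := by rintro rfl; simp at hlen
    obtain ⟨x, hx, k, hk, hpre⟩ :=
      exists_drop_prefix_of_prefix_flatten hs' ((prefix_append_right_inj v).mp h)
    refine ⟨x, mem_cons_of_mem v hx, v.length + k, by simpa using hk, ?_⟩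
    rwa [drop_length_add_append]

end List

section

variable {α : Type*} [LinearOrder α]

theorem IsLyndon.singleton (a : α) : IsLyndon [a] :=
  ⟨List.cons_ne_nil a [], fun i hi hlen => by simp at hlen; omega⟩

theorem IsLyndon.append_lt {u v : List α} (hu : IsLyndon u) (hv : IsLyndon v) (huv : u < v) :
    u ++ v < v := by
  by_cases hp : u <+: v
  · obtain ⟨t, rfl⟩ := hp
    have ht : t ≠ [] := by rintro rfl; simp at huv
    have : u ++ t < t := by
      simpa using hv.2 u.length (List.length_pos_iff.mpr hu.1)
        (by simpa using List.length_pos_iff.mpr ht)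
    exact List.append_left_lt this
  · simpa using huv.append_of_not_prefix hp v []

theorem IsLyndon.append {u v : List α} (hu : IsLyndon u) (hv : IsLyndon v) (huv : u < v) :
    IsLyndon (u ++ v) := by
  refine ⟨by simp [hu.1], fun i hi hilen => ?_⟩
  rcases lt_trichotomy i u.length with hlt | rfl | hgt
  · have hnp : ¬ u <+: u.drop i := fun h => by have := h.length_le; simp at this; omega
    rw [List.drop_append_of_le_length hlt.le]
    exact (hu.2 i hi hlt).append_of_not_prefix hnp v v
  · simpa using hu.append_lt hv huv
  · have hdrop : (u ++ v).drop i = v.drop (i - u.length) := by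
      rw [List.drop_append, List.drop_eq_nil_of_le hgt.le, List.nil_append]
    rw [hdrop]
    exact (hu.append_lt hv huv).trans (hv.2 _ (by omega) (by simp at hilen; omega))

def IsLyndonFactorization (l : List (List α)) (w : List α) : Prop :=
  (∀ u ∈ l, IsLyndon u) ∧ l.IsChain (· ≥ ·) ∧ l.flatten = w

namespace IsLyndonFactorization

theorem tail {v : List α} {t : List (List α)} {w : List α}
    (h : IsLyndonFactorization (v :: t) w) : IsLyndonFactorization t t.flatten :=
  ⟨fun x hx => h.1 x (List.mem_cons_of_mem v hx), h.2.1.tail, rfl⟩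

theorem eq_nil {l : List (List α)} (h : IsLyndonFactorization l []) : l = [] := by
  obtain ⟨hly, -, hfl⟩ := h
  rw [List.flatten_eq_nil_iff] at hfl
  exact List.eq_nil_iff_forall_not_mem.mpr fun u hu => (hly u hu).1 (hfl u hu)

theorem exists_append {u : List α} (hu : IsLyndon u) :
    ∀ {l : List (List α)} {w : List α}, IsLyndonFactorization l w →
      ∃ l', IsLyndonFactorization l' (u ++ w)
  | [], w, ⟨_, _, hfl⟩ => ⟨[u], by simp [IsLyndonFactorization, hu, ← hfl]⟩
  | c :: l, w, h@⟨hly, hch, hfl⟩ => by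
    by_cases hcu : c ≤ u
    · refine ⟨u :: c :: l, ?_, List.isChain_cons_cons.mpr ⟨hcu, hch⟩, by simp [← hfl]⟩
      simpa [hu] using hly
    · have huc := hu.append (h.1 c List.mem_cons_self) (not_le.mp hcu)
      obtain ⟨l', hl'⟩ := exists_append huc h.tail
      exact ⟨l', by simpa [← hfl] using hl'⟩

theorem length_le_head {v : List α} {t : List (List α)} {w : List α}
    (h : IsLyndonFactorization (v :: t) w) {u : List α} (hu : IsLyndon u) (hpre : u <+: w) :
    u.length ≤ v.length := by
  obtain ⟨hly, hch, rfl⟩ := h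
  by_contra! hlong
  have hvu : v <+: u := List.prefix_of_prefix_length_le (List.prefix_append v _) hpre hlong.le
  obtain ⟨s, rfl⟩ := hvu
  have hs : s ≠ [] := by rintro rfl; simp at hlong
  obtain ⟨x, hx, k, hk, hsx⟩ :=
    List.exists_drop_prefix_of_prefix_flatten hs ((List.prefix_append_right_inj v).mp hpre)
  have hv : 0 < v.length := List.length_pos_iff.mpr (hly v List.mem_cons_self).1
  have hsuffix : v ++ s < s.drop k := by
    simpa using hu.2 (v.length + k) (by omega) (by simp; omega)
  have hsx : s.drop k ≤ x := le_of_not_gt hsx.le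
  have hxv : x ≤ v := List.rel_of_pairwise_cons hch.pairwise hx
  have hvs : v ≤ v ++ s := le_of_not_gt (List.prefix_append v s).le
  exact lt_irrefl _ (hsuffix.trans_le (hsx.trans (hxv.trans hvs)))

theorem unique :
    ∀ {l₁ l₂ : List (List α)} {w : List α},
      IsLyndonFactorization l₁ w → IsLyndonFactorization l₂ w → l₁ = l₂
  | [], _, _, ⟨_, _, rfl⟩, h₂ => h₂.eq_nil.symm
  | _ :: _, [], _, h₁, ⟨_, _, rfl⟩ => h₁.eq_nil
  | u :: t₁, v :: t₂, w, h₁, h₂ => by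
    have hu : u <+: w := h₁.2.2 ▸ List.prefix_append u _
    have hv : v <+: w := h₂.2.2 ▸ List.prefix_append v _
    have hle₁ := h₂.length_le_head (h₁.1 u List.mem_cons_self) hu
    have hle₂ := h₁.length_le_head (h₂.1 v List.mem_cons_self) hv
    obtain rfl : u = v :=
      (List.prefix_of_prefix_length_le hu hv hle₁).eq_of_length (le_antisymm hle₁ hle₂)
    have htails : t₁.flatten = t₂.flatten :=
      List.append_cancel_left (h₁.2.2.trans h₂.2.2.symm)
    rw [unique h₁.tail (htails ▸ h₂.tail)]

end IsLyndonFactorization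

theorem exists_isLyndonFactorization : ∀ w : List α, ∃ l, IsLyndonFactorization l w
  | [] => ⟨[], by simp [IsLyndonFactorization]⟩
  | a :: w => (exists_isLyndonFactorization w).elim fun _ h => h.exists_append (.singleton a)

end

theorem lyndon_factorization_general {α : Type*} [LinearOrder α] (w : List α) :
    ∃! l : List (List α),
      (∀ u ∈ l, IsLyndon u) ∧ List.Chain' (fun a b => b ≤ a) l ∧ l.flatten = w := by
  obtain ⟨l, hl⟩ := exists_isLyndonFactorization w
  exact ⟨l, hl, fun _ hl' => IsLyndonFactorization.unique hl' hl⟩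

/-- Chen–Fox–Lyndon: every nonempty word `w` can be written uniquely as a concatenation
`w = u₁^{i₁} ⋯ u_k^{i_k}` of Lyndon words `u₁ > ⋯ > u_k`, i.e. as the concatenation of a
(weakly) non-increasing list of Lyndon words. -/
theorem lyndon_factorization {α : Type*} [LinearOrder α] (w : List α) (hw : w ≠ []) :
    ∃! l : List (List α),
      (∀ u ∈ l, IsLyndon u) ∧ List.Chain' (fun a b => b ≤ a) l ∧ l.flatten = w :=
  lyndon_factorization_general w
end

section
/- The number of Lyndon words of length s over a finite alphabet of size m equals Witt's necklace function φ_s(m) = (1/s) Σ_{d | s} μ(d) m^{s/d}. -/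
open Function Finset

namespace CyclicWord

variable {α : Type*} {n d : ℕ}

def rotate (j : ℕ) (w : Fin n → α) : Fin n → α :=
  fun x => w ⟨(x + j) % n, Nat.mod_lt _ x.pos⟩

lemma rotate_apply_of_add_eq (w : Fin n → α) {j : ℕ} {x y : Fin n} (h : (x : ℕ) + j = y) :
    rotate j w x = w y :=
  congrArg w (Fin.ext (by simp only [h, Nat.mod_eq_of_lt y.2]))

lemma rotate_apply_of_add_eq_add (w : Fin n → α) {j : ℕ} {x y : Fin n}
    (h : (x : ℕ) + j = y + n) : rotate j w x = w y :=
  congrArg w (Fin.ext (by simp only [h, Nat.add_mod_right, Nat.mod_eq_of_lt y.2]))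

lemma rotate_rotate (a b : ℕ) (w : Fin n → α) : rotate b (rotate a w) = rotate (a + b) w := by
  funext x
  simp only [rotate, Nat.mod_add_mod, add_assoc, add_comm b]

lemma rotate_mod (j : ℕ) (w : Fin n → α) : rotate (j % n) w = rotate j w := by
  funext x
  simp only [rotate, Nat.add_mod_mod]

lemma rotate_zero (w : Fin n → α) : rotate 0 w = w := by
  funext x
  exact rotate_apply_of_add_eq w (add_zero _)

lemma rotate_self (w : Fin n → α) : rotate n w = w := by
  rw [← rotate_mod, Nat.mod_self, rotate_zero]

lemma rotate_injective (j : ℕ) : Injective (rotate j : (Fin n → α) → Fin n → α) := by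
  rcases n.eq_zero_or_pos with rfl | hn
  · exact fun _ _ _ => Subsingleton.elim _ _
  refine LeftInverse.injective (g := rotate (n - j % n)) fun w => ?_
  rw [← rotate_mod j, rotate_rotate, Nat.add_sub_cancel' (Nat.mod_lt j hn).le, rotate_self]

lemma iterate_rotate_one (j : ℕ) :
    (rotate 1)^[j] = (rotate j : (Fin n → α) → Fin n → α) := by
  induction j with
  | zero => funext w; exact (rotate_zero w).symm
  | succ j ih => funext w; rw [iterate_succ_apply', ih, rotate_rotate]

lemma isPeriodicPt_rotate_one_iff {j : ℕ} {w : Fin n → α} :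
    IsPeriodicPt (rotate 1) j w ↔ rotate j w = w := by
  rw [IsPeriodicPt, IsFixedPt, iterate_rotate_one]

noncomputable def period (w : Fin n → α) : ℕ := minimalPeriod (rotate 1) w

lemma rotate_eq_self_iff {j : ℕ} {w : Fin n → α} : rotate j w = w ↔ period w ∣ j := by
  rw [← isPeriodicPt_rotate_one_iff, isPeriodicPt_iff_minimalPeriod_dvd, period]

lemma period_dvd (w : Fin n → α) : period w ∣ n :=
  rotate_eq_self_iff.1 (rotate_self w)

lemma period_pos (w : Fin n → α) : 0 < period w := by
  rcases n.eq_zero_or_pos with rfl | hn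
  · exact IsPeriodicPt.minimalPeriod_pos one_pos (Subsingleton.elim _ _)
  · exact IsPeriodicPt.minimalPeriod_pos hn (isPeriodicPt_rotate_one_iff.2 (rotate_self w))

lemma period_rotate (j : ℕ) (w : Fin n → α) : period (rotate j w) = period w :=
  minimalPeriod_eq_minimalPeriod_iff.2 fun k => by
    rw [isPeriodicPt_rotate_one_iff, isPeriodicPt_rotate_one_iff, rotate_rotate, add_comm,
      ← rotate_rotate, (rotate_injective j).eq_iff]

/-- The power `g ^ (n / d)`, as a word of length `n`. -/
def tile (hdn : d ∣ n) (g : Fin d → α) : Fin n → α :=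
  fun x => g ⟨x % d, Nat.mod_lt _ (Nat.pos_of_dvd_of_pos hdn x.pos)⟩

lemma rotate_tile (hdn : d ∣ n) (j : ℕ) (g : Fin d → α) :
    rotate j (tile hdn g) = tile hdn (rotate j g) := by
  funext x
  simp only [rotate, tile, Nat.mod_mod_of_dvd _ hdn, Nat.mod_add_mod]

lemma tile_injective (hn : 0 < n) (hdn : d ∣ n) :
    Injective (tile hdn : (Fin d → α) → Fin n → α) := by
  intro g g' h
  funext y
  simpa [tile, Nat.mod_eq_of_lt y.2] using congrFun h (Fin.castLE (Nat.le_of_dvd hn hdn) y)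

lemma period_tile (hn : 0 < n) (hdn : d ∣ n) (g : Fin d → α) :
    period (tile hdn g) = period g :=
  minimalPeriod_eq_minimalPeriod_iff.2 fun k => by
    rw [isPeriodicPt_rotate_one_iff, isPeriodicPt_rotate_one_iff, rotate_tile,
      (tile_injective hn hdn).eq_iff]

lemma tile_castLE (hn : 0 < n) (hdn : d ∣ n) {w : Fin n → α} (hw : rotate d w = w) :
    tile hdn (w ∘ Fin.castLE (Nat.le_of_dvd hn hdn)) = w := by
  set u : ℕ → α := fun k => w ⟨k % n, Nat.mod_lt _ hn⟩
  have hu : Periodic u d := fun k => by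
    simpa only [rotate, Nat.mod_add_mod] using congrFun hw ⟨k % n, Nat.mod_lt _ hn⟩
  funext x
  have hxd : x % d < n :=
    (Nat.mod_lt _ (Nat.pos_of_dvd_of_pos hdn hn)).trans_le (Nat.le_of_dvd hn hdn)
  simpa [u, tile, Nat.mod_eq_of_lt hxd, Nat.mod_eq_of_lt x.2] using hu.map_mod_nat x

lemma card_period_eq_of_dvd [Fintype α] (hn : 0 < n) (hdn : d ∣ n) :
    #{w : Fin n → α | period w = d} = #{g : Fin d → α | period g = d} := by
  refine (card_bij (fun g _ => tile hdn g) (fun g hg => ?_)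
    (fun g _ g' _ h => tile_injective hn hdn h) (fun w hw => ?_)).symm
  · simpa [period_tile hn hdn] using hg
  · rw [mem_filter] at hw
    have hrot : rotate d w = w := rotate_eq_self_iff.2 (hw.2 ▸ dvd_rfl)
    refine ⟨w ∘ Fin.castLE (Nat.le_of_dvd hn hdn), ?_, tile_castLE hn hdn hrot⟩
    rw [mem_filter, ← period_tile hn hdn, tile_castLE hn hdn hrot]
    exact ⟨mem_univ _, hw.2⟩

lemma card_fun_eq_sum_card_period_eq_self [Fintype α] (hn : 0 < n) :
    Fintype.card (Fin n → α) = ∑ d ∈ n.divisors, #{g : Fin d → α | period g = d} := by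
  rw [← card_univ, card_eq_sum_card_fiberwise (f := period) (t := n.divisors)
    fun w _ => Nat.mem_divisors.2 ⟨period_dvd w, hn.ne'⟩]
  exact sum_congr rfl fun d hd => card_period_eq_of_dvd hn (Nat.dvd_of_mem_divisors hd)

section LinearOrder

variable [LinearOrder α]

def LtRotations (w : Fin n → α) : Prop :=
  ∀ i, 0 < i → i < n → toLex w < toLex (rotate i w)

lemma LtRotations.period_eq {w : Fin n → α} (hw : LtRotations w) (hn : 0 < n) :
    period w = n := by
  refine (Nat.le_of_dvd hn (period_dvd w)).eq_of_not_lt fun hlt => ?_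
  have := hw _ (period_pos w) hlt
  rw [rotate_eq_self_iff.2 dvd_rfl] at this
  exact lt_irrefl _ this

lemma LtRotations.not_rotate {w : Fin n → α} (hw : LtRotations w) {k : ℕ} (hk : 0 < k)
    (hkn : k < n) : ¬ LtRotations (rotate k w) := fun hwk => by
  have := hwk (n - k) (by omega) (by omega)
  rw [rotate_rotate, Nat.add_sub_cancel' hkn.le, rotate_self] at this
  exact lt_asymm (hw k hk hkn) this

lemma LtRotations.eq_of_rotate_eq {g g' : Fin n → α} (hg : LtRotations g)
    (hg' : LtRotations g') {i i' : ℕ} (hi : i < n) (hi' : i' < n)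
    (h : rotate i g = rotate i' g') : g = g' ∧ i = i' := by
  have rotate_ne_of_lt : ∀ {g g' : Fin n → α} {i i' : ℕ}, LtRotations g → LtRotations g' →
      i < i' → i' < n → rotate i g ≠ rotate i' g' := fun {g g' i i'} hg hg' hlt hi' h => by
    have : g = rotate (i' - i) g' :=
      rotate_injective i (by rw [h, rotate_rotate, Nat.sub_add_cancel hlt.le])
    exact hg'.not_rotate (by omega) (by omega) (this ▸ hg)
  rcases lt_trichotomy i i' with hlt | rfl | hlt
  · exact (rotate_ne_of_lt hg hg' hlt hi' h).elim
  · exact ⟨rotate_injective i h, rfl⟩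
  · exact (rotate_ne_of_lt hg' hg hlt hi h.symm).elim

lemma exists_ltRotations_rotate_eq {w : Fin n → α} (hw : period w = n) :
    ∃ g, LtRotations g ∧ ∃ i : Fin n, rotate i g = w := by
  have hn : 0 < n := hw ▸ period_pos w
  obtain ⟨j, -, hj⟩ := exists_min_image univ (fun j : Fin n => toLex (rotate j w))
    ⟨⟨0, hn⟩, mem_univ _⟩
  refine ⟨rotate j w, fun i hi hin => lt_of_le_of_ne ?_ fun h => ?_,
    ⟨(n - j) % n, Nat.mod_lt _ hn⟩, ?_⟩
  · rw [rotate_rotate, ← rotate_mod (j + i)]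
    exact hj ⟨_, Nat.mod_lt _ hn⟩ (mem_univ _)
  · have : n ∣ i := by
      rw [← hw, ← period_rotate j, ← rotate_eq_self_iff]
      exact (toLex.injective h).symm
    exact absurd (Nat.le_of_dvd hi this) (by omega)
  · rw [rotate_mod, rotate_rotate, Nat.add_sub_cancel' j.2.le, rotate_self]

open Classical in
lemma card_period_eq_self [Fintype α] (n : ℕ) :
    #{w : Fin n → α | period w = n} = n * #{g : Fin n → α | LtRotations g} := by
  have hcard : #(({g : Fin n → α | LtRotations g} : Finset _) ×ˢ (univ : Finset (Fin n))) =
      #{g : Fin n → α | LtRotations g} * n := by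
    rw [card_product, card_univ, Fintype.card_fin]
  rw [mul_comm, ← hcard]
  symm
  refine card_bij (fun p _ => rotate p.2 p.1) (fun p hp => ?_) (fun p hp p' hp' h => ?_)
    (fun w hw => ?_)
  · simp only [mem_product, mem_filter] at hp ⊢
    exact ⟨mem_univ _, (period_rotate _ _).trans (hp.1.2.period_eq p.2.pos)⟩
  · simp only [mem_product, mem_filter] at hp hp'
    obtain ⟨hg, hi⟩ := hp.1.2.eq_of_rotate_eq hp'.1.2 p.2.2 p'.2.2 h
    exact Prod.ext hg (Fin.ext hi)
  · obtain ⟨g, hg, i, rfl⟩ := exists_ltRotations_rotate_eq (mem_filter.1 hw).2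
    exact ⟨(g, i), by simpa using hg, rfl⟩

lemma ofFn_lt_drop_iff {w : Fin n → α} {i : ℕ} :
    List.ofFn w < (List.ofFn w).drop i ↔ ∃ j, ∃ h : j + i < n,
      (∀ k (hk : k < j), w ⟨k, by omega⟩ = w ⟨k + i, by omega⟩) ∧
        w ⟨j, by omega⟩ < w ⟨j + i, h⟩ := by
  rw [List.lt_iff_exists]
  simp only [List.length_ofFn, List.length_drop, List.getElem_drop, List.getElem_ofFn]
  constructor
  · rintro (⟨-, h⟩ | ⟨j, hj, hji, hagree, hlt⟩)
    · omega
    · exact ⟨j, by omega, fun k hk => by simpa [add_comm] using hagree k hk,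
        by simpa [add_comm] using hlt⟩
  · rintro ⟨j, hj, hagree, hlt⟩
    exact Or.inr ⟨j, by omega, by omega, fun k hk => by simpa [add_comm] using hagree k hk,
      by simpa [add_comm] using hlt⟩

/-- If `w < rotate i w` only because of a letter beyond position `n - i`, then the suffix of
`w` of length `n - i` is also its prefix, and rotating by `n - i` makes `w` smaller. -/
lemma toLex_rotate_sub_lt {w : Fin n → α} {i : ℕ} {j : Fin n} (hi : i < n) (hj : n ≤ j + i)
    (hagree : ∀ k < j, w k = rotate i w k) (hlt : w j < rotate i w j) :
    toLex (rotate (n - i) w) < toLex w := by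
  refine ⟨⟨j + i - n, by omega⟩, fun k hk => ?_, ?_⟩
  · have hk' : (k : ℕ) < j + i - n := hk
    calc rotate (n - i) w k = w ⟨k + (n - i), by omega⟩ := rotate_apply_of_add_eq w rfl
      _ = rotate i w ⟨k + (n - i), by omega⟩ := hagree _ (by rw [Fin.lt_def]; dsimp; omega)
      _ = w k := rotate_apply_of_add_eq_add w (by dsimp; omega)
  · calc rotate (n - i) w ⟨j + i - n, _⟩ = w j := rotate_apply_of_add_eq w (by dsimp; omega)
      _ < rotate i w j := hlt
      _ = w ⟨j + i - n, _⟩ := rotate_apply_of_add_eq_add w (by dsimp; omega)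

lemma isLyndon_ofFn_iff (hn : 0 < n) {w : Fin n → α} :
    IsLyndon (List.ofFn w) ↔ LtRotations w := by
  simp only [IsLyndon, ne_eq, List.ofFn_eq_nil_iff, List.length_ofFn, ofFn_lt_drop_iff]
  constructor
  · rintro ⟨-, h⟩ i hi hin
    obtain ⟨j, hj, hagree, hlt⟩ := h i hi hin
    refine ⟨⟨j, by omega⟩, fun k hk => (hagree k hk).trans ?_, hlt.trans_eq ?_⟩ <;>
      exact (rotate_apply_of_add_eq w rfl).symm
  · refine fun hw => ⟨hn.ne', fun i hi hin => ?_⟩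
    obtain ⟨j, hagree, hlt⟩ := hw i hi hin
    by_cases hj : j + i < n
    · refine ⟨j, hj, fun k hk => (hagree ⟨k, by omega⟩ hk).trans ?_, hlt.trans_eq ?_⟩ <;>
        exact rotate_apply_of_add_eq w rfl
    · exact absurd (toLex_rotate_sub_lt hin (by omega) hagree hlt)
        (hw _ (by omega) (by omega)).asymm

open Classical in
theorem card_pow_eq_sum_mul_card_lyndon [Fintype α] (hn : 0 < n) :
    Fintype.card α ^ n =
      ∑ d ∈ n.divisors, d * #{g : Fin d → α | IsLyndon (List.ofFn g)} := by
  rw [← Fintype.card_fin n, ← Fintype.card_fun, Fintype.card_fin,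
    card_fun_eq_sum_card_period_eq_self hn]
  refine sum_congr rfl fun d hd => ?_
  rw [card_period_eq_self, filter_congr fun g _ => isLyndon_ofFn_iff (Nat.pos_of_mem_divisors hd)]

end LinearOrder

end CyclicWord

open Classical in
/-- The number of Lyndon words of length `s ≥ 1` over an alphabet of size `m` equals
Witt's necklace function `φ_s(m) = (1/s) ∑_{d ∣ s} μ(d) m^(s/d)`. -/
theorem card_lyndon_eq_necklace (m s : ℕ) (hs : 1 ≤ s) :
    (s : ℤ) * (Finset.univ.filter
        fun f : Fin s → Fin m => IsLyndon (List.ofFn f)).card =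
      ∑ d ∈ s.divisors, ArithmeticFunction.moebius d * (m : ℤ) ^ (s / d) := by
  have hsum : ∀ n > 0, ∑ d ∈ n.divisors,
      ((d : ℕ) : ℤ) * #{g : Fin d → Fin m | IsLyndon (List.ofFn g)} = (m : ℤ) ^ n :=
    fun n hn => by
      exact_mod_cast (Fintype.card_fin m ▸ CyclicWord.card_pow_eq_sum_mul_card_lyndon hn).symm
  rw [← ArithmeticFunction.sum_eq_iff_sum_mul_moebius_eq.1 hsum s hs,
    ← Nat.sum_divisorsAntidiagonal fun d e => ArithmeticFunction.moebius d * (m : ℤ) ^ e]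
  simp
end
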